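/- arXiv:math/9803005 — 3 statements merged into one kernel-verified Lean document; each statement's English description precedes it below -/
import Mathlib

section
/- Let (A, Δ) be a regular multiplier Hopf algebra and let a₁, a₂, ..., aₙ be finitely many elements of A. Then there exist elements e, f ∈ A such that e·aᵢ = aᵢ and aᵢ·f = aᵢ for all i = 1, ..., n (existence of one-sided local units). -/
/-! # A framework for (regular) multiplier Hopf algebras, following
Drabant–Van Daele–Zhang, "Actions of Multiplier Hopf Algebras".

Algebras are (possibly non-unital) associative algebras over `ℂ` with
non-degenerate product.  A multiplier of such an algebra (whose multiplication
is recorded as a bilinear map `mul`) is a pair `(L, R)` of linear maps with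
`L (x*y) = L x * y`, `R (x*y) = x * R y` and `x * L y = R x * y`; this is the
standard description of the multiplier algebra `M(A)`.

A regular multiplier Hopf algebra is recorded by the comultiplication
`Δ : A → M(A ⊗ A)` together with the four canonical maps
`T1 a b = Δ(a)(1 ⊗ b)`, `T2 a b = (a ⊗ 1)Δ(b)`, `T3 a b = Δ(a)(b ⊗ 1)`,
`T4 a b = (1 ⊗ a)Δ(b)` (all with values in `A ⊗ A`), which are required to be
bijective as maps of `A ⊗ A`; together with the counit and the (bijective)
antipode satisfying the usual axioms, expressed in covered (Sweedler) form. -/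

open scoped TensorProduct
open TensorProduct LinearMap

noncomputable section

/-! ## Multipliers -/

section MulPair

variable {X : Type*} [AddCommGroup X] [Module ℂ X]

/-- A multiplier of the (possibly non-unital) algebra `(X, mul)`. -/
@[ext]
structure MulPair (mul : X →ₗ[ℂ] X →ₗ[ℂ] X) : Type _ where
  L : X →ₗ[ℂ] X
  R : X →ₗ[ℂ] X
  L_mul : ∀ x y : X, L (mul x y) = mul (L x) y
  R_mul : ∀ x y : X, R (mul x y) = mul x (R y)
  middle : ∀ x y : X, mul x (L y) = mul (R x) y

namespace MulPair

variable {mul : X →ₗ[ℂ] X →ₗ[ℂ] X}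

instance : One (MulPair mul) :=
  ⟨⟨LinearMap.id, LinearMap.id, fun _ _ => rfl, fun _ _ => rfl, fun _ _ => rfl⟩⟩

@[simp] theorem one_L : (1 : MulPair mul).L = LinearMap.id := rfl
@[simp] theorem one_R : (1 : MulPair mul).R = LinearMap.id := rfl

instance : Mul (MulPair mul) :=
  ⟨fun m n =>
    ⟨m.L ∘ₗ n.L, n.R ∘ₗ m.R,
      fun x y => by simp [n.L_mul, m.L_mul],
      fun x y => by simp [m.R_mul, n.R_mul],
      fun x y => by simp [m.middle, n.middle]⟩⟩

@[simp] theorem mul_L (m n : MulPair mul) : (m * n).L = m.L ∘ₗ n.L := rfl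
@[simp] theorem mul_R (m n : MulPair mul) : (m * n).R = n.R ∘ₗ m.R := rfl

instance : Zero (MulPair mul) :=
  ⟨⟨0, 0, fun x y => by simp, fun x y => by simp, fun x y => by simp⟩⟩

@[simp] theorem zero_L : (0 : MulPair mul).L = 0 := rfl
@[simp] theorem zero_R : (0 : MulPair mul).R = 0 := rfl

instance : Add (MulPair mul) :=
  ⟨fun m n =>
    ⟨m.L + n.L, m.R + n.R,
      fun x y => by simp [m.L_mul, n.L_mul],
      fun x y => by simp [m.R_mul, n.R_mul],
      fun x y => by simp [m.middle, n.middle]⟩⟩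

@[simp] theorem add_L (m n : MulPair mul) : (m + n).L = m.L + n.L := rfl
@[simp] theorem add_R (m n : MulPair mul) : (m + n).R = m.R + n.R := rfl

instance : Neg (MulPair mul) :=
  ⟨fun m =>
    ⟨-m.L, -m.R,
      fun x y => by simp [m.L_mul],
      fun x y => by simp [m.R_mul],
      fun x y => by simp [m.middle]⟩⟩

@[simp] theorem neg_L (m : MulPair mul) : (-m).L = -m.L := rfl
@[simp] theorem neg_R (m : MulPair mul) : (-m).R = -m.R := rfl

instance : Sub (MulPair mul) :=
  ⟨fun m n =>
    ⟨m.L - n.L, m.R - n.R,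
      fun x y => by simp [m.L_mul, n.L_mul, sub_eq_add_neg],
      fun x y => by simp [m.R_mul, n.R_mul, sub_eq_add_neg],
      fun x y => by simp [m.middle, n.middle, sub_eq_add_neg]⟩⟩

@[simp] theorem sub_L (m n : MulPair mul) : (m - n).L = m.L - n.L := rfl
@[simp] theorem sub_R (m n : MulPair mul) : (m - n).R = m.R - n.R := rfl

instance : SMul ℂ (MulPair mul) :=
  ⟨fun c m =>
    ⟨c • m.L, c • m.R,
      fun x y => by simp [m.L_mul],
      fun x y => by simp [m.R_mul],
      fun x y => by simp [m.middle]⟩⟩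

@[simp] theorem smul_L (c : ℂ) (m : MulPair mul) : (c • m).L = c • m.L := rfl
@[simp] theorem smul_R (c : ℂ) (m : MulPair mul) : (c • m).R = c • m.R := rfl

instance : SMul ℕ (MulPair mul) :=
  ⟨fun n m =>
    ⟨n • m.L, n • m.R,
      fun x y => by simp [m.L_mul],
      fun x y => by simp [m.R_mul],
      fun x y => by simp [m.middle]⟩⟩

@[simp] theorem nsmul_L (n : ℕ) (m : MulPair mul) : (n • m).L = n • m.L := rfl
@[simp] theorem nsmul_R (n : ℕ) (m : MulPair mul) : (n • m).R = n • m.R := rfl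

instance : SMul ℤ (MulPair mul) :=
  ⟨fun n m =>
    ⟨n • m.L, n • m.R,
      fun x y => by simp [m.L_mul],
      fun x y => by simp [m.R_mul],
      fun x y => by simp [m.middle]⟩⟩

@[simp] theorem zsmul_L (n : ℤ) (m : MulPair mul) : (n • m).L = n • m.L := rfl
@[simp] theorem zsmul_R (n : ℤ) (m : MulPair mul) : (n • m).R = n • m.R := rfl

/-- The underlying pair of linear maps. -/
def toProd (m : MulPair mul) : (X →ₗ[ℂ] X) × (X →ₗ[ℂ] X) := (m.L, m.R)

theorem toProd_injective : Function.Injective (toProd (mul := mul)) := by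
  intro m n h
  have h1 : m.L = n.L := congrArg Prod.fst h
  have h2 : m.R = n.R := congrArg Prod.snd h
  exact MulPair.ext h1 h2

instance : AddCommGroup (MulPair mul) :=
  toProd_injective.addCommGroup toProd rfl (fun _ _ => rfl) (fun _ => rfl)
    (fun _ _ => rfl) (fun _ _ => rfl) (fun _ _ => rfl)

/-- `toProd` as an additive monoid homomorphism. -/
def toProdHom : MulPair mul →+ (X →ₗ[ℂ] X) × (X →ₗ[ℂ] X) :=
  { toFun := toProd, map_zero' := rfl, map_add' := fun _ _ => rfl }

instance : Module ℂ (MulPair mul) :=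
  Function.Injective.module ℂ (toProdHom (mul := mul)) toProd_injective fun _ _ => rfl

theorem mul_add (m n k : MulPair mul) : m * (n + k) = m * n + m * k := by
  ext x <;> simp

theorem add_mul (m n k : MulPair mul) : (m + n) * k = m * k + n * k := by
  ext x <;> simp

theorem smul_mul (c : ℂ) (m n : MulPair mul) : (c • m) * n = c • (m * n) := by
  ext x <;> simp

theorem mul_smul (c : ℂ) (m n : MulPair mul) : m * (c • n) = c • (m * n) := by
  ext x <;> simp

theorem mul_assoc (m n k : MulPair mul) : m * n * k = m * (n * k) := by
  ext x <;> simp [LinearMap.comp_assoc]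

end MulPair

end MulPair

/-! ## Slice maps -/

section Slices

variable {X Y : Type*} [AddCommGroup X] [Module ℂ X] [AddCommGroup Y] [Module ℂ Y]

/-- Apply a functional to the second tensor leg: `(ι ⊗ φ)`. -/
def sliceR (φ : X →ₗ[ℂ] ℂ) : Y ⊗[ℂ] X →ₗ[ℂ] Y :=
  (TensorProduct.rid ℂ Y).toLinearMap ∘ₗ LinearMap.lTensor Y φ

/-- Apply a functional to the first tensor leg: `(φ ⊗ ι)`. -/
def sliceL (φ : X →ₗ[ℂ] ℂ) : X ⊗[ℂ] Y →ₗ[ℂ] Y :=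
  (TensorProduct.lid ℂ Y).toLinearMap ∘ₗ LinearMap.rTensor Y φ

@[simp] theorem sliceR_tmul (φ : X →ₗ[ℂ] ℂ) (y : Y) (x : X) :
    sliceR φ (y ⊗ₜ[ℂ] x) = φ x • y := by simp [sliceR]

@[simp] theorem sliceL_tmul (φ : X →ₗ[ℂ] ℂ) (x : X) (y : Y) :
    sliceL φ (x ⊗ₜ[ℂ] y) = φ x • y := by simp [sliceL]

end Slices

/-! ## Regular multiplier Hopf algebras -/

section RegMultHopf

variable (A : Type*) [NonUnitalRing A] [Module ℂ A] [SMulCommClass ℂ A A]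
  [IsScalarTower ℂ A A]

/-- The componentwise multiplication of `A ⊗ A`, as a bilinear map. -/
def tmulMul : (A ⊗[ℂ] A) →ₗ[ℂ] (A ⊗[ℂ] A) →ₗ[ℂ] (A ⊗[ℂ] A) :=
  TensorProduct.curry
    ((TensorProduct.map (LinearMap.mul' ℂ A) (LinearMap.mul' ℂ A)) ∘ₗ
      (TensorProduct.tensorTensorTensorComm ℂ A A A A).toLinearMap)

@[simp] theorem tmulMul_tmul (x y x' y' : A) :
    tmulMul A (x ⊗ₜ[ℂ] y) (x' ⊗ₜ[ℂ] y') = (x * x') ⊗ₜ[ℂ] (y * y') := by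
  simp [tmulMul]

variable {A}

/-- A regular multiplier Hopf algebra structure on the non-unital algebra `A`
(Van Daele; see Section 2 of the paper).  The product of `A` is required to be
non-degenerate; `Δ` is the comultiplication with values in the multiplier
algebra `M(A ⊗ A)`; `T1 a b = Δ(a)(1 ⊗ b)`, `T2 a b = (a ⊗ 1)Δ(b)`,
`T3 a b = Δ(a)(b ⊗ 1)` and `T4 a b = (1 ⊗ a)Δ(b)` are the canonical maps with
values in `A ⊗ A`, and the four lifted maps on `A ⊗ A` are bijective (the last
two bijectivity conditions express regularity).  `counit` and the bijective
antipode `S` satisfy the usual axioms in covered form. -/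
structure RegMultHopf : Type _ where
  nondegL : ∀ a : A, (∀ b : A, a * b = 0) → a = 0
  nondegR : ∀ a : A, (∀ b : A, b * a = 0) → a = 0
  Δ : A → MulPair (tmulMul A)
  Δ_add : ∀ a b : A, Δ (a + b) = Δ a + Δ b
  Δ_smul : ∀ (c : ℂ) (a : A), Δ (c • a) = c • Δ a
  Δ_mul : ∀ a b : A, Δ (a * b) = Δ a * Δ b
  T1 : A →ₗ[ℂ] A →ₗ[ℂ] A ⊗[ℂ] A
  T2 : A →ₗ[ℂ] A →ₗ[ℂ] A ⊗[ℂ] A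
  T3 : A →ₗ[ℂ] A →ₗ[ℂ] A ⊗[ℂ] A
  T4 : A →ₗ[ℂ] A →ₗ[ℂ] A ⊗[ℂ] A
  T1_spec : ∀ (a b : A) (u : A ⊗[ℂ] A),
    tmulMul A (T1 a b) u = (Δ a).L (LinearMap.lTensor A (LinearMap.mulLeft ℂ b) u)
  T2_spec : ∀ (a b : A) (u : A ⊗[ℂ] A),
    tmulMul A u (T2 a b) = (Δ b).R (LinearMap.rTensor A (LinearMap.mulRight ℂ a) u)
  T3_spec : ∀ (a b : A) (u : A ⊗[ℂ] A),
    tmulMul A (T3 a b) u = (Δ a).L (LinearMap.rTensor A (LinearMap.mulLeft ℂ b) u)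
  T4_spec : ∀ (a b : A) (u : A ⊗[ℂ] A),
    tmulMul A u (T4 a b) = (Δ b).R (LinearMap.lTensor A (LinearMap.mulRight ℂ a) u)
  T1_bij : Function.Bijective (TensorProduct.lift T1)
  T2_bij : Function.Bijective (TensorProduct.lift T2)
  T3_bij : Function.Bijective (TensorProduct.lift T3)
  T4_bij : Function.Bijective (TensorProduct.lift T4)
  coassoc : ∀ a b c : A,
    (TensorProduct.assoc ℂ A A A) (LinearMap.rTensor A (T2 a) (T1 b c)) =
      LinearMap.lTensor A (T1.flip c) (T2 a b)
  counit : A →ₗ[ℂ] ℂ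
  counit_mul : ∀ a b : A, counit (a * b) = counit a * counit b
  counit_T1 : ∀ a b : A, sliceL counit (T1 a b) = a * b
  counit_T2 : ∀ a b : A, sliceR counit (T2 a b) = a * b
  S : A →ₗ[ℂ] A
  Sinv : A →ₗ[ℂ] A
  S_Sinv : ∀ a : A, S (Sinv a) = a
  Sinv_S : ∀ a : A, Sinv (S a) = a
  S_mul : ∀ a b : A, S (a * b) = S b * S a
  S_T1 : ∀ a b : A,
    LinearMap.mul' ℂ A (LinearMap.rTensor A S (T1 a b)) = counit a • b
  S_T2 : ∀ a b : A,
    LinearMap.mul' ℂ A (LinearMap.lTensor A S (T2 a b)) = counit b • a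

/-- `φ` is a left integral on `(A, Δ)`: a non-zero functional with
`(ι ⊗ φ)Δ(a) = φ(a)1` in `M(A)`; evaluated against elements of `A` this
reads `(ι ⊗ φ)(Δ(a)(b ⊗ 1)) = φ(a)b` and `(ι ⊗ φ)((b ⊗ 1)Δ(a)) = φ(a)b`. -/
def IsLeftIntegral (H : RegMultHopf (A := A)) (φ : A →ₗ[ℂ] ℂ) : Prop :=
  φ ≠ 0 ∧ (∀ a b : A, sliceR φ (H.T3 a b) = φ a • b) ∧
    ∀ a b : A, sliceR φ (H.T2 b a) = φ a • b

end RegMultHopf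

/-! ## Module algebras and smash products -/

section ModAlg

variable {A : Type*} [NonUnitalRing A] [Module ℂ A] [SMulCommClass ℂ A A]
  [IsScalarTower ℂ A A]
variable {R : Type*} [AddCommGroup R] [Module ℂ R]

/-- The bilinear map `(p, q) ↦ (p ▷ x) ⬝ (q ▷ z)` used to express the module
algebra condition `a ▷ (x ⬝ y) = Σ (a₍₁₎ ▷ x) ⬝ (a₍₂₎ ▷ y)` in covered form. -/
def actPair (mulR : R →ₗ[ℂ] R →ₗ[ℂ] R) (act : A →ₗ[ℂ] R →ₗ[ℂ] R) (x z : R) :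
    A →ₗ[ℂ] A →ₗ[ℂ] R :=
  LinearMap.mk₂ ℂ (fun p q => mulR (act p x) (act q z))
    (fun p p' q => by simp)
    (fun c p q => by simp)
    (fun p q q' => by simp)
    (fun c p q => by simp)

/-- `R`, an algebra with multiplication `mulR` (associative, with
non-degenerate product), is a left `A`-module algebra for the unital action
`act`; the compatibility `a(xy) = Σ (a₍₁₎x)(a₍₂₎y)` is expressed in the
covered form `a ▷ (x ⬝ (b ▷ z)) = Σ (a₍₁₎ ▷ x) ⬝ ((a₍₂₎ b) ▷ z)` using
`T1 a b = Δ(a)(1 ⊗ b)`. -/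
structure IsModAlg (H : RegMultHopf (A := A)) (mulR : R →ₗ[ℂ] R →ₗ[ℂ] R)
    (act : A →ₗ[ℂ] R →ₗ[ℂ] R) : Prop where
  mul_assoc' : ∀ x y z : R, mulR (mulR x y) z = mulR x (mulR y z)
  mul_nondegL : ∀ x : R, (∀ y : R, mulR x y = 0) → x = 0
  mul_nondegR : ∀ x : R, (∀ y : R, mulR y x = 0) → x = 0
  act_act : ∀ (a b : A) (x : R), act (a * b) x = act a (act b x)
  unital : Submodule.span ℂ {y : R | ∃ a x, act a x = y} = ⊤
  compat : ∀ (a b : A) (x z : R),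
    act a (mulR x (act b z)) =
      TensorProduct.lift (actPair mulR act x z) (H.T1 a b)

/-- The bilinear map `(p, q) ↦ (x ⬝ (p ▷ x')) ⊗ q` describing the smash
product multiplication in covered form. -/
def smashPair (mulR : R →ₗ[ℂ] R →ₗ[ℂ] R) (act : A →ₗ[ℂ] R →ₗ[ℂ] R) (x x' : R) :
    A →ₗ[ℂ] A →ₗ[ℂ] R ⊗[ℂ] A :=
  LinearMap.mk₂ ℂ (fun p q => mulR x (act p x') ⊗ₜ[ℂ] q)
    (fun p p' q => by simp [add_tmul])
    (fun c p q => by simp [smul_tmul'])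
    (fun p q q' => by simp [tmul_add])
    (fun c p q => by simp [tmul_smul])

/-- The bilinear map `(p, q) ↦ p ▷ (f (q ▷ z))`, used to express in covered
form the extension of an action to the multiplier algebra `M(R)`:
`(a ▷ m)x = Σ a₍₁₎ ▷ (m (S(a₍₂₎) ▷ x))`. -/
def actSandwich (act : A →ₗ[ℂ] R →ₗ[ℂ] R) (f : R →ₗ[ℂ] R) (z : R) :
    A →ₗ[ℂ] A →ₗ[ℂ] R :=
  LinearMap.mk₂ ℂ (fun p q => act p (f (act q z)))
    (fun p p' q => by simp)
    (fun c p q => by simp)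
    (fun p q q' => by simp)
    (fun c p q => by simp)

/-- The bilinear map `(p, q) ↦ (x ⬝ γ(p)) ⊗ q` for a map `γ` into the
multiplier algebra `M(R)`. -/
def multTensorPair {mulR : R →ₗ[ℂ] R →ₗ[ℂ] R} (γ : A →ₗ[ℂ] MulPair mulR) (x : R) :
    A →ₗ[ℂ] A →ₗ[ℂ] R ⊗[ℂ] A :=
  LinearMap.mk₂ ℂ (fun p q => ((γ p).R x) ⊗ₜ[ℂ] q)
    (fun p p' q => by simp [add_tmul])
    (fun c p q => by simp [smul_tmul'])
    (fun p q q' => by simp [tmul_add])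
    (fun c p q => by simp [tmul_smul])

/-- `μ` is the multiplication of the smash product `R # A`:
`(x # a)(x' # a') = Σ x(a₍₁₎ ▷ x') # a₍₂₎a'`, expressed via
`T1 a a' = Δ(a)(1 ⊗ a') = Σ a₍₁₎ ⊗ a₍₂₎a'`. -/
def IsSmashMul (H : RegMultHopf (A := A)) (mulR : R →ₗ[ℂ] R →ₗ[ℂ] R)
    (act : A →ₗ[ℂ] R →ₗ[ℂ] R)
    (μ : (R ⊗[ℂ] A) →ₗ[ℂ] (R ⊗[ℂ] A) →ₗ[ℂ] (R ⊗[ℂ] A)) : Prop :=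
  ∀ (x x' : R) (a a' : A),
    μ (x ⊗ₜ[ℂ] a) (x' ⊗ₜ[ℂ] a') =
      TensorProduct.lift (smashPair mulR act x x') (H.T1 a a')

end ModAlg

/-! ## Dual pairs of regular multiplier Hopf algebras -/

section Pairing

variable {A B : Type*} [NonUnitalRing A] [Module ℂ A] [SMulCommClass ℂ A A]
  [IsScalarTower ℂ A A] [NonUnitalRing B] [Module ℂ B] [SMulCommClass ℂ B B]
  [IsScalarTower ℂ B B]

/-- A (non-degenerate) pairing of regular multiplier Hopf algebras in the
sense of Drabant–Van Daele.  `β` is the bilinear form; `lA a b = a ▷ b =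
Σ ⟨a, b₍₂₎⟩ b₍₁₎`, `lB b a = b ▷ a = Σ ⟨a₍₂₎, b⟩ a₍₁₎`, `rA a b = a ◁ b =
Σ ⟨a₍₁₎, b⟩ a₍₂₎`, `rB b a = b ◁ a = Σ ⟨a, b₍₁₎⟩ b₍₂₎` are the Sweedler leg
actions, tied to the comultiplications via the `..._leg` axioms and dual to
the multiplications via the `dual...` axioms; all four actions are unital
module actions. -/
structure MHAPairing (HA : RegMultHopf (A := A)) (HB : RegMultHopf (A := B)) :
    Type _ where
  β : A →ₗ[ℂ] B →ₗ[ℂ] ℂ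
  nondegA : ∀ a : A, (∀ b : B, β a b = 0) → a = 0
  nondegB : ∀ b : B, (∀ a : A, β a b = 0) → b = 0
  lA : A →ₗ[ℂ] B →ₗ[ℂ] B
  lB : B →ₗ[ℂ] A →ₗ[ℂ] A
  rA : A →ₗ[ℂ] B →ₗ[ℂ] A
  rB : B →ₗ[ℂ] A →ₗ[ℂ] B
  lA_leg : ∀ (a : A) (b c : B), sliceR (β a) (HB.T3 b c) = lA a b * c
  rB_leg : ∀ (a : A) (b c : B), sliceL (β a) (HB.T4 c b) = c * rB b a
  lB_leg : ∀ (b : B) (a c : A), sliceR (β.flip b) (HA.T3 a c) = lB b a * c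
  rA_leg : ∀ (b : B) (a c : A), sliceL (β.flip b) (HA.T4 c a) = c * rA a b
  dual1 : ∀ (a : A) (b b' : B), β a (b * b') = β (rA a b) b'
  dual2 : ∀ (a : A) (b b' : B), β a (b' * b) = β (lB b a) b'
  dual3 : ∀ (a a' : A) (b : B), β (a * a') b = β a' (rB b a)
  dual4 : ∀ (a a' : A) (b : B), β (a' * a) b = β a' (lA a b)
  lA_act : ∀ (a a' : A) (b : B), lA (a * a') b = lA a (lA a' b)
  lB_act : ∀ (b b' : B) (a : A), lB (b * b') a = lB b (lB b' a)
  rA_act : ∀ (a : A) (b b' : B), rA a (b * b') = rA (rA a b) b'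
  rB_act : ∀ (b : B) (a a' : A), rB b (a * a') = rB (rB b a) a'
  lA_unital : Submodule.span ℂ {y : B | ∃ a b, lA a b = y} = ⊤
  lB_unital : Submodule.span ℂ {y : A | ∃ b a, lB b a = y} = ⊤
  rA_unital : Submodule.span ℂ {y : A | ∃ a b, rA a b = y} = ⊤
  rB_unital : Submodule.span ℂ {y : B | ∃ b a, rB b a = y} = ⊤

end Pairing

/-! ## The dual action -/

section DualAction

variable {A B : Type*} [NonUnitalRing A] [Module ℂ A] [SMulCommClass ℂ A A]
  [IsScalarTower ℂ A A] [NonUnitalRing B] [Module ℂ B] [SMulCommClass ℂ B B]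
  [IsScalarTower ℂ B B]
variable {R : Type*} [AddCommGroup R] [Module ℂ R]
variable {HA : RegMultHopf (A := A)} {HB : RegMultHopf (A := B)}

/-- The dual action of `B` on the smash product `R # A`:
`b · (x # a) = x # (b ▷ a) = Σ ⟨a₍₂₎, b⟩ x # a₍₁₎`. -/
def dualAct (P : MHAPairing HA HB) : B →ₗ[ℂ] (R ⊗[ℂ] A) →ₗ[ℂ] R ⊗[ℂ] A :=
  (LinearMap.lTensorHom R) ∘ₗ P.lB

@[simp] theorem dualAct_tmul (P : MHAPairing HA HB) (b : B) (x : R) (a : A) :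
    dualAct P b (x ⊗ₜ[ℂ] a) = x ⊗ₜ[ℂ] P.lB b a := rfl

end DualAction

end

/-! Pick `c` with `ε(c) = 1` (if `ε = 0`, then `ab = (ε ⊗ ι)Δ(a)(1 ⊗ b) = 0` for all `a, b`,
so `A = 0`). By bijectivity of `T1` write `c ⊗ a = Σ Δ(pᵢ)(1 ⊗ qᵢ)`; applying `ε ⊗ ι` gives
`Σ pᵢqᵢ = a`. For every `y`, `T1` maps `(y ⊗ 1)(Σ pᵢ ⊗ qᵢ)` to `Δ(y)(c ⊗ 1)(1 ⊗ a)`, and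
`Δ(y)(c ⊗ 1) ∈ A ⊗ A` by regularity, so `(y ⊗ 1)(Σ pᵢ ⊗ qᵢ) ∈ A ⊗ Aa`. Non-degeneracy of the
product then gives `Σ pᵢ ⊗ qᵢ ∈ A ⊗ Aa`, hence `a = Σ pᵢqᵢ ∈ Aa`. Right units are obtained
through the antipode, and common units for finitely many elements by the induction step
`e + e' - e'e`, with `e'` a left unit for `a - ea`. -/

section JointInjectivity

variable {K V W M N : Type*} [Field K] [AddCommGroup V] [Module K V] [AddCommGroup W]
  [Module K W] [AddCommGroup M] [Module K M] [AddCommGroup N] [Module K N] {ι : Type*}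

theorem TensorProduct.eq_zero_of_forall_rTensor_eq_zero {φ : ι → V →ₗ[K] W}
    (hφ : ∀ v, (∀ i, φ i v = 0) → v = 0) {t : V ⊗[K] M}
    (ht : ∀ i, rTensor M (φ i) t = 0) : t = 0 := by
  let b := Module.Free.chooseBasis K M
  let eV := LinearEquiv.lTensor V b.repr ≪≫ₗ finsuppScalarRight K K V _
  let eW := LinearEquiv.lTensor W b.repr ≪≫ₗ finsuppScalarRight K K W _
  have natural : ∀ i s k, eW (rTensor M (φ i) s) k = φ i (eV s k) := by
    intro i s k
    induction s using TensorProduct.induction_on with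
    | zero => simp
    | tmul v m => simp [eV, eW]
    | add s s' hs hs' => simp only [map_add, Finsupp.add_apply, hs, hs']
  refine eV.injective (Finsupp.ext fun k => ?_)
  rw [map_zero, Finsupp.zero_apply]
  exact hφ _ fun i => by rw [← natural, ht, map_zero, Finsupp.zero_apply]

theorem TensorProduct.eq_zero_of_forall_lTensor_eq_zero {φ : ι → V →ₗ[K] W}
    (hφ : ∀ v, (∀ i, φ i v = 0) → v = 0) {t : M ⊗[K] V}
    (ht : ∀ i, lTensor M (φ i) t = 0) : t = 0 := by
  have : TensorProduct.comm K M V t = 0 :=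
    eq_zero_of_forall_rTensor_eq_zero hφ fun i => by rw [rTensor_comm, ht, map_zero]
  simpa using this

theorem TensorProduct.mem_range_lTensor_of_forall_rTensor_mem {φ : ι → V →ₗ[K] W}
    (hφ : ∀ v, (∀ i, φ i v = 0) → v = 0) (f : M →ₗ[K] N) {u : V ⊗[K] N}
    (hu : ∀ i, rTensor N (φ i) u ∈ range (lTensor W f)) : u ∈ range (lTensor V f) := by
  let q := (range f).mkQ
  have exact_V : Function.Exact (lTensor V f) (lTensor V q) :=
    lTensor_exact V (exact_map_mkQ_range f) (Submodule.mkQ_surjective _)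
  have exact_W : Function.Exact (lTensor W f) (lTensor W q) :=
    lTensor_exact W (exact_map_mkQ_range f) (Submodule.mkQ_surjective _)
  refine (exact_V _).mp (eq_zero_of_forall_rTensor_eq_zero hφ fun i => ?_)
  obtain ⟨w, hw⟩ := hu i
  rw [← LinearMap.comp_apply, rTensor_comp_lTensor, ← lTensor_comp_rTensor,
    LinearMap.comp_apply, ← hw]
  exact exact_W.apply_apply_eq_zero w

end JointInjectivity

section LocalUnits

variable {A : Type*} [NonUnitalRing A] [Module ℂ A] [SMulCommClass ℂ A A]
  [IsScalarTower ℂ A A]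

theorem tmulMul_apply_tmul (z : A ⊗[ℂ] A) (x y : A) :
    tmulMul A z (x ⊗ₜ[ℂ] y) = map (mulRight ℂ x) (mulRight ℂ y) z := by
  induction z using TensorProduct.induction_on with
  | zero => simp
  | tmul p q => simp
  | add z z' hz hz' => simp only [map_add, LinearMap.add_apply, hz, hz']

theorem tmulMul_tmul_apply (c a : A) (w : A ⊗[ℂ] A) :
    tmulMul A (c ⊗ₜ[ℂ] a) w = rTensor A (mulLeft ℂ c) (lTensor A (mulLeft ℂ a) w) := by
  induction w using TensorProduct.induction_on with
  | zero => simp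
  | tmul p q => simp
  | add w w' hw hw' => simp only [map_add, hw, hw']

theorem tmulMul_lTensor_mulRight (x : A) (z w : A ⊗[ℂ] A) :
    tmulMul A (lTensor A (mulRight ℂ x) z) w = tmulMul A z (lTensor A (mulLeft ℂ x) w) := by
  induction z using TensorProduct.induction_on with
  | zero => simp
  | add z z' hz hz' => simp only [map_add, LinearMap.add_apply, hz, hz']
  | tmul p q =>
    induction w using TensorProduct.induction_on with
    | zero => simp
    | add w w' hw hw' => simp only [map_add, hw, hw']
    | tmul r s => simp [mul_assoc]

theorem mul'_lTensor_mulRight (a : A) (v : A ⊗[ℂ] A) :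
    mul' ℂ A (lTensor A (mulRight ℂ a) v) = mul' ℂ A v * a := by
  induction v using TensorProduct.induction_on with
  | zero => simp
  | tmul p q => simp [mul_assoc]
  | add v v' hv hv' => simp only [map_add, hv, hv', add_mul]

namespace RegMultHopf

theorem eq_zero_of_forall_tmulMul_eq_zero (H : RegMultHopf (A := A)) {z : A ⊗[ℂ] A}
    (h : ∀ w, tmulMul A z w = 0) : z = 0 := by
  refine eq_zero_of_forall_lTensor_eq_zero (φ := mulRight ℂ) H.nondegL fun y => ?_
  refine eq_zero_of_forall_rTensor_eq_zero (φ := mulRight ℂ) H.nondegL fun x => ?_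
  rw [← LinearMap.comp_apply, rTensor_comp_lTensor, ← tmulMul_apply_tmul, h]

theorem eq_of_forall_tmulMul_eq (H : RegMultHopf (A := A)) {z z' : A ⊗[ℂ] A}
    (h : ∀ w, tmulMul A z w = tmulMul A z' w) : z = z' :=
  sub_eq_zero.mp <| H.eq_zero_of_forall_tmulMul_eq_zero fun w => by
    rw [map_sub, LinearMap.sub_apply, h, sub_self]

theorem lift_T1_rTensor_mulLeft (H : RegMultHopf (A := A)) (y : A) (v : A ⊗[ℂ] A) :
    lift H.T1 (rTensor A (mulLeft ℂ y) v) = (H.Δ y).L (lift H.T1 v) := by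
  induction v using TensorProduct.induction_on with
  | zero => simp
  | add v v' hv hv' => simp only [map_add, hv, hv']
  | tmul p q =>
    refine H.eq_of_forall_tmulMul_eq fun w => ?_
    rw [rTensor_tmul, lift.tmul, lift.tmul, mulLeft_apply, H.T1_spec, H.Δ_mul,
      MulPair.mul_L, LinearMap.comp_apply, ← H.T1_spec, ← (H.Δ y).L_mul]

theorem lift_T1_lTensor_mulRight (H : RegMultHopf (A := A)) (x : A) (v : A ⊗[ℂ] A) :
    lift H.T1 (lTensor A (mulRight ℂ x) v) = lTensor A (mulRight ℂ x) (lift H.T1 v) := by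
  induction v using TensorProduct.induction_on with
  | zero => simp
  | add v v' hv hv' => simp only [map_add, hv, hv']
  | tmul p q =>
    refine H.eq_of_forall_tmulMul_eq fun w => ?_
    rw [lTensor_tmul, lift.tmul, lift.tmul, mulRight_apply, H.T1_spec,
      tmulMul_lTensor_mulRight, H.T1_spec, ← lTensor_comp_apply, ← mulLeft_mul]

theorem Δ_L_tmul (H : RegMultHopf (A := A)) (y c a : A) :
    (H.Δ y).L (c ⊗ₜ[ℂ] a) = lTensor A (mulRight ℂ a) (H.T3 y c) := by
  refine H.eq_of_forall_tmulMul_eq fun w => ?_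
  rw [← (H.Δ y).L_mul, tmulMul_tmul_apply, ← H.T3_spec, tmulMul_lTensor_mulRight]

theorem sliceL_counit_lift_T1 (H : RegMultHopf (A := A)) (v : A ⊗[ℂ] A) :
    sliceL H.counit (lift H.T1 v) = mul' ℂ A v := by
  induction v using TensorProduct.induction_on with
  | zero => simp
  | add v v' hv hv' => simp only [map_add, hv, hv']
  | tmul p q => rw [lift.tmul, H.counit_T1, mul'_apply]

theorem rTensor_mulLeft_mem_range_lTensor_mulRight (H : RegMultHopf (A := A)) {c a : A}
    {u : A ⊗[ℂ] A} (hu : lift H.T1 u = c ⊗ₜ[ℂ] a) (y : A) :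
    rTensor A (mulLeft ℂ y) u ∈ range (lTensor A (mulRight ℂ a)) := by
  obtain ⟨w, hw⟩ := H.T1_bij.surjective (H.T3 y c)
  refine ⟨w, H.T1_bij.injective ?_⟩
  rw [lift_T1_lTensor_mulRight, hw, lift_T1_rTensor_mulLeft, hu, Δ_L_tmul]

theorem exists_mul_eq_counit_smul (H : RegMultHopf (A := A)) (c a : A) :
    ∃ e, e * a = H.counit c • a := by
  obtain ⟨u, hu⟩ := H.T1_bij.surjective (c ⊗ₜ[ℂ] a)
  have hφ : ∀ x : A, (∀ y : A, mulLeft ℂ y x = 0) → x = 0 := H.nondegR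
  obtain ⟨v, rfl⟩ := mem_range_lTensor_of_forall_rTensor_mem hφ (mulRight ℂ a)
    (H.rTensor_mulLeft_mem_range_lTensor_mulRight hu)
  refine ⟨mul' ℂ A v, ?_⟩
  rw [← mul'_lTensor_mulRight, ← sliceL_counit_lift_T1, hu, sliceL_tmul]

theorem eq_zero_of_counit_eq_zero (H : RegMultHopf (A := A)) (hε : H.counit = 0) (a : A) :
    a = 0 :=
  H.nondegL a fun b => by rw [← H.counit_T1, hε]; simp [sliceL]

theorem exists_mul_left_eq (H : RegMultHopf (A := A)) (a : A) : ∃ e, e * a = a := by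
  by_cases hε : ∀ c, H.counit c = 0
  · exact ⟨0, by rw [H.eq_zero_of_counit_eq_zero (LinearMap.ext hε) a, mul_zero]⟩
  · obtain ⟨c, hc⟩ := not_forall.mp hε
    obtain ⟨e, he⟩ := H.exists_mul_eq_counit_smul c a
    refine ⟨(H.counit c)⁻¹ • e, ?_⟩
    rw [smul_mul_assoc, he, smul_smul, inv_mul_cancel₀ hc, one_smul]

theorem Sinv_mul (H : RegMultHopf (A := A)) (x y : A) :
    H.Sinv (x * y) = H.Sinv y * H.Sinv x := by
  conv_lhs => rw [← H.S_Sinv x, ← H.S_Sinv y, ← H.S_mul, H.Sinv_S]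

theorem exists_mul_right_eq (H : RegMultHopf (A := A)) (a : A) : ∃ f, a * f = a := by
  obtain ⟨e, he⟩ := H.exists_mul_left_eq (H.S a)
  refine ⟨H.Sinv e, ?_⟩
  calc a * H.Sinv e = H.Sinv (e * H.S a) := by rw [Sinv_mul, Sinv_S]
    _ = a := by rw [he, Sinv_S]

end RegMultHopf

end LocalUnits

section CommonUnits

variable {R ι : Type*} [NonUnitalRing R]

theorem exists_common_left_unit (h : ∀ x : R, ∃ e, e * x = x) (s : Finset ι) (a : ι → R) :
    ∃ e, ∀ i ∈ s, e * a i = a i := by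
  classical
  induction s using Finset.induction_on with
  | empty => exact ⟨0, by simp⟩
  | insert j s _ ih =>
    obtain ⟨e, he⟩ := ih
    obtain ⟨e', he'⟩ := h (a j - e * a j)
    have expand : ∀ y : R, (e + e' - e' * e) * y = e * y + e' * (y - e * y) := fun y => by
      rw [sub_mul, add_mul, mul_sub, mul_assoc]; abel
    refine ⟨e + e' - e' * e, (Finset.forall_mem_insert _ _ _).mpr ⟨?_, fun i hi => ?_⟩⟩
    · rw [expand, he']; abel
    · rw [expand, he i hi, sub_self, mul_zero, add_zero]

theorem exists_common_right_unit (h : ∀ x : R, ∃ f, x * f = x) (s : Finset ι) (a : ι → R) :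
    ∃ f, ∀ i ∈ s, a i * f = a i := by
  obtain ⟨e, he⟩ := exists_common_left_unit (R := Rᵐᵒᵖ)
    (fun x => let ⟨f, hf⟩ := h x.unop; ⟨.op f, by simpa using congrArg MulOpposite.op hf⟩)
    s (fun i => MulOpposite.op (a i))
  exact ⟨e.unop, fun i hi => by simpa using congrArg MulOpposite.unop (he i hi)⟩

end CommonUnits

/-- **Proposition 2.2.** Let `(A, Δ)` be a regular multiplier Hopf algebra and
`a₁, …, aₙ` finitely many elements of `A`.  Then there exist `e, f ∈ A` with
`e * aᵢ = aᵢ` and `aᵢ * f = aᵢ` for all `i` (one-sided local units). -/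
theorem exists_one_sided_local_units
    {A : Type*} [NonUnitalRing A] [Module ℂ A] [SMulCommClass ℂ A A]
    [IsScalarTower ℂ A A] (H : RegMultHopf (A := A))
    {n : ℕ} (a : Fin n → A) :
    ∃ e f : A, ∀ i, e * a i = a i ∧ a i * f = a i := by
  obtain ⟨e, he⟩ := exists_common_left_unit H.exists_mul_left_eq Finset.univ a
  obtain ⟨f, hf⟩ := exists_common_right_unit H.exists_mul_right_eq Finset.univ a
  exact ⟨e, f, fun i => ⟨he i (Finset.mem_univ i), hf i (Finset.mem_univ i)⟩⟩
end

section
/- Let (A, Δ) be an algebraic quantum group and let a₁, a₂, ..., aₙ be finitely many elements of A. Then there exists an element e ∈ A such that aᵢ·e = e·aᵢ = aᵢ for all i = 1, ..., n (existence of two-sided local units). -/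
/-! # A framework for (regular) multiplier Hopf algebras, following
Drabant–Van Daele–Zhang, "Actions of Multiplier Hopf Algebras".

Algebras are (possibly non-unital) associative algebras over `ℂ` with
non-degenerate product.  A multiplier of such an algebra (whose multiplication
is recorded as a bilinear map `mul`) is a pair `(L, R)` of linear maps with
`L (x*y) = L x * y`, `R (x*y) = x * R y` and `x * L y = R x * y`; this is the
standard description of the multiplier algebra `M(A)`.

A regular multiplier Hopf algebra is recorded by the comultiplication
`Δ : A → M(A ⊗ A)` together with the four canonical maps
`T1 a b = Δ(a)(1 ⊗ b)`, `T2 a b = (a ⊗ 1)Δ(b)`, `T3 a b = Δ(a)(b ⊗ 1)`,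
`T4 a b = (1 ⊗ a)Δ(b)` (all with values in `A ⊗ A`), which are required to be
bijective as maps of `A ⊗ A`; together with the counit and the (bijective)
antipode satisfying the usual axioms, expressed in covered (Sweedler) form. -/

open scoped TensorProduct
open TensorProduct LinearMap

/-! ## Infrastructure for the proof of local units -/

noncomputable section LocalUnits

namespace LocalUnits

open TensorProduct LinearMap

variable {A : Type*} [NonUnitalRing A] [Module ℂ A] [SMulCommClass ℂ A A]
  [IsScalarTower ℂ A A]

lemma sliceR_rTensor (θ : A →ₗ[ℂ] ℂ) (f : A →ₗ[ℂ] A) (t : A ⊗[ℂ] A) :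
    sliceR θ (rTensor A f t) = f (sliceR θ t) := by
  induction t using TensorProduct.induction_on with
  | zero => simp
  | tmul p q => simp
  | add x y hx hy => simp [hx, hy]

lemma sliceR_lTensor (θ : A →ₗ[ℂ] ℂ) (g : A →ₗ[ℂ] A) (t : A ⊗[ℂ] A) :
    sliceR θ (lTensor A g t) = sliceR (θ ∘ₗ g) t := by
  induction t using TensorProduct.induction_on with
  | zero => simp
  | tmul p q => simp
  | add x y hx hy => simp [hx, hy]

lemma sliceL_lTensor (θ : A →ₗ[ℂ] ℂ) (g : A →ₗ[ℂ] A) (t : A ⊗[ℂ] A) :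
    sliceL θ (lTensor A g t) = g (sliceL θ t) := by
  induction t using TensorProduct.induction_on with
  | zero => simp
  | tmul p q => simp
  | add x y hx hy => simp [hx, hy]

lemma sliceL_rTensor (θ : A →ₗ[ℂ] ℂ) (f : A →ₗ[ℂ] A) (t : A ⊗[ℂ] A) :
    sliceL θ (rTensor A f t) = sliceL (θ ∘ₗ f) t := by
  induction t using TensorProduct.induction_on with
  | zero => simp
  | tmul p q => simp
  | add x y hx hy => simp [hx, hy]

lemma sliceL_zero_fun (t : A ⊗[ℂ] A) : sliceL (0 : A →ₗ[ℂ] ℂ) t = 0 := by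
  induction t using TensorProduct.induction_on with
  | zero => simp
  | tmul p q => simp
  | add x y hx hy => simp [hx, hy]

lemma fubini (φ ψ : A →ₗ[ℂ] ℂ) (t : A ⊗[ℂ] A) :
    φ (sliceL ψ t) = ψ (sliceR φ t) := by
  induction t using TensorProduct.induction_on with
  | zero => simp
  | tmul p q => simp [smul_eq_mul, mul_comm]
  | add x y hx hy => simp [hx, hy]

lemma eq_zero_of_sliceR (t : A ⊗[ℂ] A)
    (h : ∀ θ : A →ₗ[ℂ] ℂ, sliceR θ t = 0) : t = 0 := by
  classical
  set B := Module.Basis.ofVectorSpace ℂ A with hB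
  have key : ∀ (i j) (t : A ⊗[ℂ] A),
      ((B.tensorProduct B).repr t) (i, j) = B.repr (sliceR (B.coord j) t) i := by
    intro i j t
    induction t using TensorProduct.induction_on with
    | zero => simp
    | tmul p q =>
      simp [Module.Basis.tensorProduct_repr_tmul_apply, Module.Basis.coord_apply, smul_eq_mul]
    | add x y hx hy => simp [hx, hy]
  have h0 : (B.tensorProduct B).repr t = 0 := by
    ext ij
    obtain ⟨i, j⟩ := ij
    rw [key i j t, h (B.coord j)]
    simp
  exact ((B.tensorProduct B).repr.map_eq_zero_iff).mp h0

lemma eq_zero_of_sliceL (t : A ⊗[ℂ] A)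
    (h : ∀ θ : A →ₗ[ℂ] ℂ, sliceL θ t = 0) : t = 0 := by
  classical
  set B := Module.Basis.ofVectorSpace ℂ A with hB
  have key : ∀ (i j) (t : A ⊗[ℂ] A),
      ((B.tensorProduct B).repr t) (i, j) = B.repr (sliceL (B.coord i) t) j := by
    intro i j t
    induction t using TensorProduct.induction_on with
    | zero => simp
    | tmul p q =>
      simp [Module.Basis.tensorProduct_repr_tmul_apply, Module.Basis.coord_apply, smul_eq_mul,
        mul_comm]
    | add x y hx hy => simp [hx, hy]
  have h0 : (B.tensorProduct B).repr t = 0 := by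
    ext ij
    obtain ⟨i, j⟩ := ij
    rw [key i j t, h (B.coord i)]
    simp
  exact ((B.tensorProduct B).repr.map_eq_zero_iff).mp h0

lemma ltr_comm (f g : A →ₗ[ℂ] A) (t : A ⊗[ℂ] A) :
    lTensor A g (rTensor A f t) = rTensor A f (lTensor A g t) := by
  induction t using TensorProduct.induction_on with
  | zero => simp
  | tmul p q => simp
  | add x y hx hy => simp [hx, hy]

lemma tmul_tmul_right (s : A ⊗[ℂ] A) (x y : A) :
    tmulMul A s (x ⊗ₜ[ℂ] y)
      = lTensor A (mulRight ℂ y) (rTensor A (mulRight ℂ x) s) := by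
  induction s using TensorProduct.induction_on with
  | zero => simp
  | tmul p q => simp
  | add u v hu hv => simp [map_add, hu, hv]

lemma tmul_tmul_left (s : A ⊗[ℂ] A) (x y : A) :
    tmulMul A (x ⊗ₜ[ℂ] y) s
      = lTensor A (mulLeft ℂ y) (rTensor A (mulLeft ℂ x) s) := by
  induction s using TensorProduct.induction_on with
  | zero => simp
  | tmul p q => simp
  | add u v hu hv => simp [map_add, hu, hv]

lemma tmul_rT_mulLeft (v : A) (u s : A ⊗[ℂ] A) :
    tmulMul A u (rTensor A (mulLeft ℂ v) s)
      = tmulMul A (rTensor A (mulRight ℂ v) u) s := by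
  induction u using TensorProduct.induction_on with
  | zero => simp
  | tmul x y =>
    induction s using TensorProduct.induction_on with
    | zero => simp
    | tmul p q => simp [mul_assoc]
    | add s1 s2 h1 h2 => simp [map_add, h1, h2]
  | add u1 u2 h1 h2 => simp [map_add, h1, h2]

lemma tmul_rT_mulRight (a : A) (s u : A ⊗[ℂ] A) :
    tmulMul A (rTensor A (mulRight ℂ a) s) u
      = tmulMul A s (rTensor A (mulLeft ℂ a) u) := by
  induction u using TensorProduct.induction_on with
  | zero => simp
  | tmul x y =>
    induction s using TensorProduct.induction_on with
    | zero => simp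
    | tmul p q => simp [mul_assoc]
    | add s1 s2 h1 h2 => simp [map_add, h1, h2]
  | add u1 u2 h1 h2 => simp [map_add, h1, h2]

lemma tmul_lT_mulRight (d : A) (u s : A ⊗[ℂ] A) :
    tmulMul A u (lTensor A (mulRight ℂ d) s)
      = lTensor A (mulRight ℂ d) (tmulMul A u s) := by
  induction u using TensorProduct.induction_on with
  | zero => simp
  | tmul x y =>
    induction s using TensorProduct.induction_on with
    | zero => simp
    | tmul p q => simp [mul_assoc]
    | add s1 s2 h1 h2 => simp [map_add, h1, h2]
  | add u1 u2 h1 h2 => simp [map_add, h1, h2]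

lemma tmul_lT_mulRight' (d : A) (s u : A ⊗[ℂ] A) :
    tmulMul A (lTensor A (mulRight ℂ d) s) u
      = tmulMul A s (lTensor A (mulLeft ℂ d) u) := by
  induction u using TensorProduct.induction_on with
  | zero => simp
  | tmul x y =>
    induction s using TensorProduct.induction_on with
    | zero => simp
    | tmul p q => simp [mul_assoc]
    | add s1 s2 h1 h2 => simp [map_add, h1, h2]
  | add u1 u2 h1 h2 => simp [map_add, h1, h2]

lemma tmul_assoc (u s w : A ⊗[ℂ] A) :
    tmulMul A (tmulMul A u s) w = tmulMul A u (tmulMul A s w) := by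
  induction u using TensorProduct.induction_on with
  | zero => simp
  | tmul x y =>
    induction s using TensorProduct.induction_on with
    | zero => simp
    | tmul p q =>
      induction w using TensorProduct.induction_on with
      | zero => simp
      | tmul r t => simp [mul_assoc]
      | add w1 w2 h1 h2 => simp only [map_add]; rw [h1, h2]
    | add s1 s2 h1 h2 => simp [map_add, h1, h2]
  | add u1 u2 h1 h2 => simp [map_add, h1, h2]

lemma right_nondeg (hL : ∀ a : A, (∀ b : A, a * b = 0) → a = 0)
    (s : A ⊗[ℂ] A) (h : ∀ u, tmulMul A s u = 0) : s = 0 := by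
  have h1 : ∀ x : A, rTensor A (mulRight ℂ x) s = 0 := by
    intro x
    apply eq_zero_of_sliceL
    intro θ
    apply hL
    intro y
    have h2 : lTensor A (mulRight ℂ y) (rTensor A (mulRight ℂ x) s) = 0 := by
      rw [← tmul_tmul_right]; exact h _
    have := congrArg (sliceL θ) h2
    rwa [sliceL_lTensor, map_zero, mulRight_apply] at this
  apply eq_zero_of_sliceR
  intro θ
  apply hL
  intro x
  have := congrArg (sliceR θ) (h1 x)
  rwa [sliceR_rTensor, map_zero, mulRight_apply] at this

lemma left_nondeg (hR : ∀ a : A, (∀ b : A, b * a = 0) → a = 0)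
    (s : A ⊗[ℂ] A) (h : ∀ u, tmulMul A u s = 0) : s = 0 := by
  have h1 : ∀ x : A, rTensor A (mulLeft ℂ x) s = 0 := by
    intro x
    apply eq_zero_of_sliceL
    intro θ
    apply hR
    intro y
    have h2 : lTensor A (mulLeft ℂ y) (rTensor A (mulLeft ℂ x) s) = 0 := by
      rw [← tmul_tmul_left]; exact h _
    have := congrArg (sliceL θ) h2
    rwa [sliceL_lTensor, map_zero, mulLeft_apply] at this
  apply eq_zero_of_sliceR
  intro θ
  apply hR
  intro x
  have := congrArg (sliceR θ) (h1 x)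
  rwa [sliceR_rTensor, map_zero, mulLeft_apply] at this

lemma right_cancel (hL : ∀ a : A, (∀ b : A, a * b = 0) → a = 0)
    {s s' : A ⊗[ℂ] A} (h : ∀ u, tmulMul A s u = tmulMul A s' u) : s = s' := by
  have := right_nondeg hL (s - s') (fun u => by
    rw [map_sub, LinearMap.sub_apply, h u, sub_self])
  exact sub_eq_zero.mp this

lemma left_cancel (hR : ∀ a : A, (∀ b : A, b * a = 0) → a = 0)
    {s s' : A ⊗[ℂ] A} (h : ∀ u, tmulMul A u s = tmulMul A u s') : s = s' := by
  have := left_nondeg hR (s - s') (fun u => by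
    rw [map_sub, h u, sub_self])
  exact sub_eq_zero.mp this

variable (H : RegMultHopf (A := A))

lemma tmul_T1 (c p : A) (u : A ⊗[ℂ] A) :
    tmulMul A u (H.T1 c p) = lTensor A (mulRight ℂ p) ((H.Δ c).R u) := by
  apply right_cancel H.nondegL
  intro w
  rw [tmul_assoc, H.T1_spec, (H.Δ c).middle, tmul_lT_mulRight']

lemma MI (v c d : A) :
    rTensor A (mulLeft ℂ v) (H.T1 c d)
      = lTensor A (mulRight ℂ d) (H.T2 v c) := by
  apply left_cancel H.nondegR
  intro u
  rw [tmul_rT_mulLeft, tmul_T1, ← H.T2_spec, ← tmul_lT_mulRight]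

lemma MI2 (a c d : A) :
    rTensor A (mulRight ℂ a) (H.T1 c d)
      = lTensor A (mulRight ℂ d) (H.T3 c a) := by
  apply right_cancel H.nondegL
  intro u
  rw [tmul_rT_mulRight, H.T1_spec, tmul_lT_mulRight', H.T3_spec, ltr_comm]

lemma exists_norm {φ : A →ₗ[ℂ] ℂ} (hphi : φ ≠ 0) : ∃ c, φ c = 1 := by
  by_contra h
  push_neg at h
  apply hphi
  ext x
  by_contra hx
  have hφx : φ x ≠ 0 := by simpa using hx
  exact h ((φ x)⁻¹ • x) (by simp [map_smul, inv_mul_cancel₀ hφx])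

lemma FR (φ : A →ₗ[ℂ] ℂ) (hφ : IsLeftIntegral H φ)
    (v : A) (hv : ∀ x, φ (v * x) = 0) : φ v = 0 := by
  obtain ⟨c, hc⟩ := exists_norm hφ.1
  have hzero : (φ ∘ₗ mulLeft ℂ v) = 0 := by
    ext x; simpa using hv x
  have hL : sliceL φ (H.T2 v c) = 0 := by
    apply H.nondegL
    intro d
    have e1 : sliceL φ (lTensor A (mulRight ℂ d) (H.T2 v c))
        = sliceL φ (H.T2 v c) * d := by
      rw [sliceL_lTensor, mulRight_apply]
    rw [← e1, ← MI H v c d, sliceL_rTensor, hzero, sliceL_zero_fun]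
  have fub := fubini φ φ (H.T2 v c)
  rw [hL, map_zero, hφ.2.2 c v, hc, one_smul] at fub
  exact fub.symm

lemma exists_fin_sum (t : A ⊗[ℂ] A) :
    ∃ (m : ℕ) (u w : Fin m → A), t = ∑ j, u j ⊗ₜ[ℂ] w j := by
  induction t using TensorProduct.induction_on with
  | zero => exact ⟨0, ![], ![], by simp⟩
  | tmul x y => exact ⟨1, ![x], ![y], by simp⟩
  | add t1 t2 h1 h2 =>
    obtain ⟨m, u, w, rfl⟩ := h1
    obtain ⟨m', u', w', rfl⟩ := h2
    refine ⟨m + m', Fin.append u u', Fin.append w w', ?_⟩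
    rw [Fin.sum_univ_add]
    simp [Fin.append_left, Fin.append_right]

lemma FIN (φ : A →ₗ[ℂ] ℂ) (hφ : IsLeftIntegral H φ) (M : Submodule ℂ A)
    (t : A ⊗[ℂ] A)
    (h : ∀ d : A, sliceR φ (lTensor A (mulRight ℂ d) t) ∈ M) :
    sliceR φ t ∈ M := by
  classical
  obtain ⟨m, u, w, rfl⟩ := exists_fin_sum t
  have hslice : ∀ θ : A →ₗ[ℂ] ℂ,
      sliceR θ (∑ j, u j ⊗ₜ[ℂ] w j) = ∑ j, θ (w j) • u j := by
    intro θ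
    rw [map_sum]
    simp
  have hin : ∀ d : A, (∑ j, φ (w j * d) • u j) ∈ M := by
    intro d
    have h' := h d
    rw [sliceR_lTensor, hslice] at h'
    simpa using h'
  set h₀ : (Fin m → ℂ) →ₗ[ℂ] A := Fintype.linearCombination ℂ u with hh₀
  set p : Submodule ℂ (Fin m → ℂ) := M.comap h₀ with hp
  have h₀app : ∀ y : Fin m → ℂ, h₀ y = ∑ j, y j • u j := by
    intro y; simp [hh₀, Fintype.linearCombination_apply]
  have hinp : ∀ d : A, (fun j => φ (w j * d)) ∈ p := by
    intro d
    simp only [hp, Submodule.mem_comap, h₀app]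
    exact hin d
  suffices hx : (fun j => φ (w j)) ∈ p by
    rw [hslice φ]
    have := hx
    simp only [hp, Submodule.mem_comap, h₀app] at this
    exact this
  by_contra hx
  have hq : p.mkQ (fun j => φ (w j)) ≠ 0 := by
    simpa [Submodule.Quotient.mk_eq_zero] using hx
  set B' := Module.Basis.ofVectorSpace ℂ ((Fin m → ℂ) ⧸ p) with hB'
  have hrepr : B'.repr (p.mkQ (fun j => φ (w j))) ≠ 0 := by
    intro h0
    exact hq (B'.repr.map_eq_zero_iff.mp h0)
  obtain ⟨i, hi⟩ := Finsupp.ne_iff.mp hrepr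
  set g : (Fin m → ℂ) →ₗ[ℂ] ℂ := (B'.coord i) ∘ₗ p.mkQ with hg
  have hg0 : ∀ y ∈ p, g y = 0 := by
    intro y hy
    have : p.mkQ y = 0 := (Submodule.Quotient.mk_eq_zero p).mpr hy
    simp [hg, this]
  have hgx : g (fun j => φ (w j)) ≠ 0 := by
    simpa [hg, Module.Basis.coord_apply] using hi
  have gsum : ∀ y : Fin m → ℂ, g y = ∑ j, y j * g (Pi.single j 1) := by
    intro y
    conv_lhs => rw [pi_eq_sum_univ y, map_sum]
    refine Finset.sum_congr rfl fun j _ => ?_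
    rw [map_smul, smul_eq_mul]
    congr 1
    congr 1
    ext k
    simp [Pi.single_apply, eq_comm]
  set v₀ : A := ∑ j, g (Pi.single j 1) • w j with hv₀def
  have hv₀ : ∀ d, φ (v₀ * d) = 0 := by
    intro d
    have e : φ (v₀ * d) = ∑ j, φ (w j * d) * g (Pi.single j 1) := by
      rw [hv₀def, Finset.sum_mul, map_sum]
      refine Finset.sum_congr rfl fun j _ => ?_
      rw [smul_mul_assoc, map_smul, smul_eq_mul, mul_comm]
    rw [e, ← gsum]
    exact hg0 _ (hinp d)
  have hfr := FR H φ hφ v₀ hv₀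
  apply hgx
  rw [gsum]
  rw [hv₀def, map_sum] at hfr
  rw [← hfr]
  refine Finset.sum_congr rfl fun j _ => ?_
  rw [map_smul, smul_eq_mul, mul_comm]

lemma exists_left_unit (φ : A →ₗ[ℂ] ℂ) (hφ : IsLeftIntegral H φ) (a : A) :
    ∃ e : A, e * a = a := by
  obtain ⟨c, hc⟩ := exists_norm hφ.1
  have key : sliceR φ (H.T3 c a) ∈ LinearMap.range (mulRight ℂ a) := by
    apply FIN H φ hφ
    intro d
    rw [← MI2 H a c d, sliceR_rTensor]
    exact ⟨sliceR φ (H.T1 c d), rfl⟩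
  rw [hφ.2.1 c a, hc, one_smul] at key
  obtain ⟨e, he⟩ := key
  exact ⟨e, by simpa using he⟩

lemma exists_right_unit (φ : A →ₗ[ℂ] ℂ) (hφ : IsLeftIntegral H φ) (a : A) :
    ∃ f : A, a * f = a := by
  obtain ⟨c, hc⟩ := exists_norm hφ.1
  have key : sliceR φ (H.T2 a c) ∈ LinearMap.range (mulLeft ℂ a) := by
    apply FIN H φ hφ
    intro d
    rw [← MI H a c d, sliceR_rTensor]
    exact ⟨sliceR φ (H.T1 c d), rfl⟩
  rw [hφ.2.2 c a, hc, one_smul] at key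
  obtain ⟨f, hf⟩ := key
  exact ⟨f, by simpa using hf⟩

lemma exists_left_units (φ : A →ₗ[ℂ] ℂ) (hφ : IsLeftIntegral H φ) :
    ∀ (n : ℕ) (a : Fin n → A), ∃ e : A, ∀ i, e * a i = a i := by
  intro n
  induction n with
  | zero => exact fun a => ⟨0, fun i => i.elim0⟩
  | succ n ih =>
    intro a
    obtain ⟨e₁, he₁⟩ := ih (fun i => a i.castSucc)
    obtain ⟨e₂, he₂⟩ :=
      exists_left_unit H φ hφ (a (Fin.last n) - e₁ * a (Fin.last n))
    refine ⟨e₁ + e₂ - e₂ * e₁, fun i => ?_⟩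
    have expand : ∀ x : A, (e₁ + e₂ - e₂ * e₁) * x
        = e₁ * x + (e₂ * x - e₂ * (e₁ * x)) := by
      intro x
      rw [sub_mul, add_mul, mul_assoc, add_sub_assoc]
    refine Fin.lastCases ?_ ?_ i
    · rw [expand, ← mul_sub, he₂, add_sub_cancel]
    · intro j
      have hj := he₁ j
      rw [expand, hj, sub_self, add_zero]
lemma exists_right_units (φ : A →ₗ[ℂ] ℂ) (hφ : IsLeftIntegral H φ) :
    ∀ (n : ℕ) (a : Fin n → A), ∃ f : A, ∀ i, a i * f = a i := by
  intro n
  induction n with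
  | zero => exact fun a => ⟨0, fun i => i.elim0⟩
  | succ n ih =>
    intro a
    obtain ⟨f₁, hf₁⟩ := ih (fun i => a i.castSucc)
    obtain ⟨f₂, hf₂⟩ :=
      exists_right_unit H φ hφ (a (Fin.last n) - a (Fin.last n) * f₁)
    refine ⟨f₁ + f₂ - f₁ * f₂, fun i => ?_⟩
    have expand : ∀ x : A, x * (f₁ + f₂ - f₁ * f₂)
        = x * f₁ + (x * f₂ - (x * f₁) * f₂) := by
      intro x
      rw [mul_sub, mul_add, ← mul_assoc, add_sub_assoc]
    refine Fin.lastCases ?_ ?_ i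
    · rw [expand, ← sub_mul, hf₂, add_sub_cancel]
    · intro j
      have hj := hf₁ j
      rw [expand, hj, sub_self, add_zero]

end LocalUnits

end LocalUnits

/-! ## STATEMENT 1 -/

noncomputable section

/-- **Proposition 2.6.** Let `(A, Δ)` be an algebraic quantum group (a regular
multiplier Hopf algebra with a left integral) and `a₁, …, aₙ` finitely many
elements of `A`.  Then there exists `e ∈ A` with `aᵢ * e = e * aᵢ = aᵢ` for
all `i` (two-sided local units). -/
theorem exists_two_sided_local_units
    {A : Type*} [NonUnitalRing A] [Module ℂ A] [SMulCommClass ℂ A A]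
    [IsScalarTower ℂ A A] (H : RegMultHopf (A := A))
    (φ : A →ₗ[ℂ] ℂ) (hφ : IsLeftIntegral H φ)
    {n : ℕ} (a : Fin n → A) :
    ∃ e : A, ∀ i, a i * e = a i ∧ e * a i = a i := by
  obtain ⟨e, he⟩ := LocalUnits.exists_left_units H φ hφ n a
  obtain ⟨f, hf⟩ := LocalUnits.exists_right_units H φ hφ n a
  refine ⟨e + f - f * e, fun i => ⟨?_, ?_⟩⟩
  · rw [mul_sub, mul_add, ← mul_assoc, hf i]
    abel
  · rw [sub_mul, add_mul, mul_assoc, he i]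
    abel


end
end

section
/- Let (A, Δ) be a regular multiplier Hopf algebra and R a left A-module algebra. The multiplication defined on the vector space R ⊗ A by (x # a)(x' # a') = Σ x(a₍₁₎x') # a₍₂₎a' is associative. -/
/-! # A framework for (regular) multiplier Hopf algebras, following
Drabant–Van Daele–Zhang, "Actions of Multiplier Hopf Algebras".

Algebras are (possibly non-unital) associative algebras over `ℂ` with
non-degenerate product.  A multiplier of such an algebra (whose multiplication
is recorded as a bilinear map `mul`) is a pair `(L, R)` of linear maps with
`L (x*y) = L x * y`, `R (x*y) = x * R y` and `x * L y = R x * y`; this is the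
standard description of the multiplier algebra `M(A)`.

A regular multiplier Hopf algebra is recorded by the comultiplication
`Δ : A → M(A ⊗ A)` together with the four canonical maps
`T1 a b = Δ(a)(1 ⊗ b)`, `T2 a b = (a ⊗ 1)Δ(b)`, `T3 a b = Δ(a)(b ⊗ 1)`,
`T4 a b = (1 ⊗ a)Δ(b)` (all with values in `A ⊗ A`), which are required to be
bijective as maps of `A ⊗ A`; together with the counit and the (bijective)
antipode satisfying the usual axioms, expressed in covered (Sweedler) form. -/

open scoped TensorProduct
open TensorProduct LinearMap

/-! ## STATEMENT 4 -/

noncomputable section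

section AuxSep

variable {M N : Type*} [AddCommGroup M] [Module ℂ M] [AddCommGroup N] [Module ℂ N]

/-- Slices against all functionals on the second leg separate points. -/
theorem slice_sep_R (t : M ⊗[ℂ] N) (h : ∀ f : N →ₗ[ℂ] ℂ, sliceR f t = 0) :
    t = 0 := by
  classical
  set b := Module.Basis.ofVectorSpace ℂ N with hb
  set φ : M ⊗[ℂ] N →ₗ[ℂ] M ⊗[ℂ] (Module.Basis.ofVectorSpaceIndex ℂ N →₀ ℂ) :=
    LinearMap.lTensor M (b.repr : N →ₗ[ℂ] _) with hφ
  have hcomp : ∀ (s : M ⊗[ℂ] N) i,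
      TensorProduct.finsuppScalarRight ℂ ℂ M _ (φ s) i = sliceR (b.coord i) s := by
    intro s i
    induction s using TensorProduct.induction_on with
    | zero => simp [φ]
    | tmul m n =>
        simp [φ, TensorProduct.finsuppScalarRight_apply_tmul_apply,
          Module.Basis.coord_apply]
    | add x y hx hy => simp [map_add, Finsupp.add_apply, hx, hy]
  have hz : TensorProduct.finsuppScalarRight ℂ ℂ M _ (φ t) = 0 := by
    ext i; rw [hcomp, h]; simp
  have hφt : φ t = 0 := by
    have := congrArg (TensorProduct.finsuppScalarRight ℂ ℂ M
      (Module.Basis.ofVectorSpaceIndex ℂ N)).symm hz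
    simpa using this
  have hinv : ∀ s : M ⊗[ℂ] N,
      LinearMap.lTensor M (b.repr.symm : _ →ₗ[ℂ] N) (φ s) = s := by
    intro s
    induction s using TensorProduct.induction_on with
    | zero => simp [φ]
    | tmul m n => simp [φ]
    | add x y hx hy => rw [map_add, map_add, hx, hy]
  have := hinv t
  rw [hφt, map_zero] at this
  exact this.symm

/-- Slices against all functionals on the first leg separate points. -/
theorem slice_sep_L (t : M ⊗[ℂ] N) (h : ∀ f : M →ₗ[ℂ] ℂ, sliceL f t = 0) :
    t = 0 := by
  have hc : ∀ (f : M →ₗ[ℂ] ℂ) (s : M ⊗[ℂ] N),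
      sliceR f (TensorProduct.comm ℂ M N s) = sliceL f s := by
    intro f s
    induction s using TensorProduct.induction_on with
    | zero => simp
    | tmul m n => simp
    | add x y hx hy => simp [map_add, hx, hy]
  have h0 : (TensorProduct.comm ℂ M N) t = 0 :=
    slice_sep_R _ (fun f => by rw [hc]; exact h f)
  have := congrArg (TensorProduct.comm ℂ M N).symm h0
  simpa using this

end AuxSep

section AuxCancel

variable {A : Type*} [NonUnitalRing A] [Module ℂ A] [SMulCommClass ℂ A A]
  [IsScalarTower ℂ A A]
variable {M : Type*} [AddCommGroup M] [Module ℂ M]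

theorem cancel_fst_right (H : RegMultHopf (A := A)) (t : A ⊗[ℂ] M)
    (h : ∀ c : A, LinearMap.rTensor M (LinearMap.mulRight ℂ c) t = 0) : t = 0 := by
  apply slice_sep_R
  intro f
  apply H.nondegL
  intro c
  have hcr : ∀ s : A ⊗[ℂ] M,
      sliceR f (LinearMap.rTensor M (LinearMap.mulRight ℂ c) s) = sliceR f s * c := by
    intro s
    induction s using TensorProduct.induction_on with
    | zero => simp
    | tmul a m => simp [smul_mul_assoc]
    | add x y hx hy => simp [map_add, hx, hy, add_mul]
  have := hcr t
  rw [h c, map_zero] at this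
  exact this.symm

theorem cancel_fst_left (H : RegMultHopf (A := A)) (t : A ⊗[ℂ] M)
    (h : ∀ c : A, LinearMap.rTensor M (LinearMap.mulLeft ℂ c) t = 0) : t = 0 := by
  apply slice_sep_R
  intro f
  apply H.nondegR
  intro c
  have hcr : ∀ s : A ⊗[ℂ] M,
      sliceR f (LinearMap.rTensor M (LinearMap.mulLeft ℂ c) s) = c * sliceR f s := by
    intro s
    induction s using TensorProduct.induction_on with
    | zero => simp
    | tmul a m => simp [mul_smul_comm]
    | add x y hx hy => simp [map_add, hx, hy, mul_add]
  have := hcr t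
  rw [h c, map_zero] at this
  exact this.symm

theorem cancel_snd_right (H : RegMultHopf (A := A)) (t : M ⊗[ℂ] A)
    (h : ∀ c : A, LinearMap.lTensor M (LinearMap.mulRight ℂ c) t = 0) : t = 0 := by
  apply slice_sep_L
  intro f
  apply H.nondegL
  intro c
  have hcr : ∀ s : M ⊗[ℂ] A,
      sliceL f (LinearMap.lTensor M (LinearMap.mulRight ℂ c) s) = sliceL f s * c := by
    intro s
    induction s using TensorProduct.induction_on with
    | zero => simp
    | tmul m a => simp [smul_mul_assoc]
    | add x y hx hy => simp [map_add, hx, hy, add_mul]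
  have := hcr t
  rw [h c, map_zero] at this
  exact this.symm

theorem cancel_snd_left (H : RegMultHopf (A := A)) (t : M ⊗[ℂ] A)
    (h : ∀ c : A, LinearMap.lTensor M (LinearMap.mulLeft ℂ c) t = 0) : t = 0 := by
  apply slice_sep_L
  intro f
  apply H.nondegR
  intro c
  have hcr : ∀ s : M ⊗[ℂ] A,
      sliceL f (LinearMap.lTensor M (LinearMap.mulLeft ℂ c) s) = c * sliceL f s := by
    intro s
    induction s using TensorProduct.induction_on with
    | zero => simp
    | tmul m a => simp [mul_smul_comm]
    | add x y hx hy => simp [map_add, hx, hy, mul_add]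
  have := hcr t
  rw [h c, map_zero] at this
  exact this.symm

end AuxCancel

section AuxTmulMul

variable {A : Type*} [NonUnitalRing A] [Module ℂ A] [SMulCommClass ℂ A A]
  [IsScalarTower ℂ A A]

theorem tmulMul_assoc' (u v w : A ⊗[ℂ] A) :
    tmulMul A (tmulMul A u v) w = tmulMul A u (tmulMul A v w) := by
  induction u using TensorProduct.induction_on with
  | zero => simp
  | add x y hx hy => simp only [map_add, LinearMap.add_apply]; rw [hx, hy]
  | tmul a b =>
      induction v using TensorProduct.induction_on with
      | zero => simp
      | add x y hx hy => simp only [map_add, LinearMap.add_apply]; rw [hx, hy]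
      | tmul c d =>
          induction w using TensorProduct.induction_on with
          | zero => simp
          | add x y hx hy => simp only [map_add, LinearMap.add_apply]; rw [hx, hy]
          | tmul e f => simp [mul_assoc]

theorem tm_r (c : A) (u t : A ⊗[ℂ] A) :
    tmulMul A (LinearMap.rTensor A (LinearMap.mulRight ℂ c) u) t =
      tmulMul A u (LinearMap.rTensor A (LinearMap.mulLeft ℂ c) t) := by
  induction u using TensorProduct.induction_on with
  | zero => simp
  | add x y hx hy => simp only [map_add, LinearMap.add_apply]; rw [hx, hy]
  | tmul a b =>
      induction t using TensorProduct.induction_on with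
      | zero => simp
      | add x y hx hy => simp only [map_add, LinearMap.add_apply]; rw [hx, hy]
      | tmul e f => simp [mul_assoc]

theorem tm_l (b : A) (t w : A ⊗[ℂ] A) :
    tmulMul A t (LinearMap.lTensor A (LinearMap.mulLeft ℂ b) w) =
      tmulMul A (LinearMap.lTensor A (LinearMap.mulRight ℂ b) t) w := by
  induction t using TensorProduct.induction_on with
  | zero => simp
  | add x y hx hy => simp only [map_add, LinearMap.add_apply]; rw [hx, hy]
  | tmul a b' =>
      induction w using TensorProduct.induction_on with
      | zero => simp
      | add x y hx hy => simp only [map_add, LinearMap.add_apply]; rw [hx, hy]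
      | tmul e f => simp [mul_assoc]

theorem tm_out (b : A) (u t : A ⊗[ℂ] A) :
    tmulMul A u (LinearMap.lTensor A (LinearMap.mulRight ℂ b) t) =
      LinearMap.lTensor A (LinearMap.mulRight ℂ b) (tmulMul A u t) := by
  induction u using TensorProduct.induction_on with
  | zero => simp
  | add x y hx hy => simp only [map_add, LinearMap.add_apply]; rw [hx, hy]
  | tmul a b' =>
      induction t using TensorProduct.induction_on with
      | zero => simp
      | add x y hx hy => simp only [map_add, LinearMap.add_apply]; rw [hx, hy]
      | tmul e f => simp [mul_assoc]

theorem tm_pureL (r s : A) (u : A ⊗[ℂ] A) :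
    tmulMul A (r ⊗ₜ[ℂ] s) u =
      LinearMap.lTensor A (LinearMap.mulLeft ℂ s)
        (LinearMap.rTensor A (LinearMap.mulLeft ℂ r) u) := by
  induction u using TensorProduct.induction_on with
  | zero => simp
  | add x y hx hy => simp only [map_add, LinearMap.add_apply]; rw [hx, hy]
  | tmul e f => simp

theorem tm_pureR (a b : A) (t : A ⊗[ℂ] A) :
    tmulMul A t (a ⊗ₜ[ℂ] b) =
      LinearMap.lTensor A (LinearMap.mulRight ℂ b)
        (LinearMap.rTensor A (LinearMap.mulRight ℂ a) t) := by
  induction t using TensorProduct.induction_on with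
  | zero => simp
  | add x y hx hy => simp only [map_add, LinearMap.add_apply]; rw [hx, hy]
  | tmul e f => simp

theorem tmul_cancel_left (H : RegMultHopf (A := A)) (t : A ⊗[ℂ] A)
    (h : ∀ u : A ⊗[ℂ] A, tmulMul A t u = 0) : t = 0 := by
  apply cancel_fst_right H
  intro a
  apply cancel_snd_right H
  intro b
  have := h (a ⊗ₜ b)
  rwa [tm_pureR] at this

theorem tmul_cancel_right (H : RegMultHopf (A := A)) (t : A ⊗[ℂ] A)
    (h : ∀ u : A ⊗[ℂ] A, tmulMul A u t = 0) : t = 0 := by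
  apply cancel_fst_left H
  intro a
  apply cancel_snd_left H
  intro b
  have := h (a ⊗ₜ b)
  rwa [tm_pureL] at this

end AuxTmulMul

section AuxHopf

variable {A : Type*} [NonUnitalRing A] [Module ℂ A] [SMulCommClass ℂ A A]
  [IsScalarTower ℂ A A]

theorem T1_right (H : RegMultHopf (A := A)) (a b : A) (u : A ⊗[ℂ] A) :
    tmulMul A u (H.T1 a b) =
      LinearMap.lTensor A (LinearMap.mulRight ℂ b) ((H.Δ a).R u) := by
  rw [← sub_eq_zero]
  apply tmul_cancel_left H
  intro w
  have h1 : tmulMul A (tmulMul A u (H.T1 a b)) w =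
      tmulMul A (LinearMap.lTensor A (LinearMap.mulRight ℂ b) ((H.Δ a).R u)) w := by
    rw [tmulMul_assoc', H.T1_spec, (H.Δ a).middle, tm_l]
  rw [map_sub, LinearMap.sub_apply, h1, sub_self]

/-- `(c ⊗ 1)Δ(a)(1 ⊗ b)` computed both ways. -/
theorem T1_T2_swap (H : RegMultHopf (A := A)) (a b c : A) :
    LinearMap.rTensor A (LinearMap.mulLeft ℂ c) (H.T1 a b) =
      LinearMap.lTensor A (LinearMap.mulRight ℂ b) (H.T2 c a) := by
  rw [← sub_eq_zero]
  apply tmul_cancel_right H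
  intro u
  have h1 : tmulMul A u (LinearMap.rTensor A (LinearMap.mulLeft ℂ c) (H.T1 a b)) =
      tmulMul A u (LinearMap.lTensor A (LinearMap.mulRight ℂ b) (H.T2 c a)) := by
    rw [← tm_r, T1_right H, ← H.T2_spec, ← tm_out]
  rw [map_sub, h1, sub_self]

/-- `Δ(fa')(1 ⊗ b) = Δ(f)(Δ(a')(1 ⊗ b))`. -/
theorem T1_mul_left (H : RegMultHopf (A := A)) (f a' b : A) :
    H.T1 (f * a') b = (H.Δ f).L (H.T1 a' b) := by
  rw [← sub_eq_zero]
  apply tmul_cancel_left H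
  intro w
  have h1 : tmulMul A (H.T1 (f * a') b) w =
      tmulMul A ((H.Δ f).L (H.T1 a' b)) w := by
    rw [H.T1_spec, H.Δ_mul, MulPair.mul_L, LinearMap.comp_apply,
      ← H.T1_spec, ← (H.Δ f).L_mul]
  rw [map_sub, LinearMap.sub_apply, h1, sub_self]

/-- `Δ(f)(r ⊗ s) = (Δ(f)(1 ⊗ s))(r ⊗ 1)`. -/
theorem deltaL_tmul (H : RegMultHopf (A := A)) (f r s : A) :
    LinearMap.rTensor A (LinearMap.mulRight ℂ r) (H.T1 f s) =
      (H.Δ f).L (r ⊗ₜ[ℂ] s) := by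
  rw [← sub_eq_zero]
  apply tmul_cancel_left H
  intro u
  have h1 : tmulMul A (LinearMap.rTensor A (LinearMap.mulRight ℂ r) (H.T1 f s)) u =
      tmulMul A ((H.Δ f).L (r ⊗ₜ[ℂ] s)) u := by
    rw [tm_r, H.T1_spec, ← tm_pureL, ← (H.Δ f).L_mul]
  rw [map_sub, LinearMap.sub_apply, h1, sub_self]

theorem cancel_triple (H : RegMultHopf (A := A)) (t : (A ⊗[ℂ] A) ⊗[ℂ] A)
    (h : ∀ c : A,
      LinearMap.rTensor A (LinearMap.rTensor A (LinearMap.mulLeft ℂ c)) t = 0) :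
    t = 0 := by
  have ha : ∀ (c : A) (s : (A ⊗[ℂ] A) ⊗[ℂ] A),
      (TensorProduct.assoc ℂ A A A)
          (LinearMap.rTensor A (LinearMap.rTensor A (LinearMap.mulLeft ℂ c)) s) =
        LinearMap.rTensor (A ⊗[ℂ] A) (LinearMap.mulLeft ℂ c)
          ((TensorProduct.assoc ℂ A A A) s) := by
    intro c s
    induction s using TensorProduct.induction_on with
    | zero => simp
    | add x y hx hy => simp [map_add, hx, hy]
    | tmul u w =>
        induction u using TensorProduct.induction_on with
        | zero => simp
        | add x y hx hy =>
            simp only [add_tmul, map_add] at hx hy ⊢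
            rw [hx, hy]
        | tmul a b => simp
  have h0 : (TensorProduct.assoc ℂ A A A) t = 0 := by
    apply cancel_fst_left H
    intro c
    rw [← ha, h, map_zero]
  have := congrArg (TensorProduct.assoc ℂ A A A).symm h0
  simpa using this

/-- `f ↦ Δ(f)w` as a linear map. -/
def deltaL (H : RegMultHopf (A := A)) (w : A ⊗[ℂ] A) : A →ₗ[ℂ] A ⊗[ℂ] A where
  toFun f := (H.Δ f).L w
  map_add' f g := by
    show (H.Δ (f + g)).L w = (H.Δ f).L w + (H.Δ g).L w
    rw [H.Δ_add]; simp
  map_smul' c f := by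
    show (H.Δ (c • f)).L w = c • (H.Δ f).L w
    rw [H.Δ_smul]; simp

@[simp] theorem deltaL_apply (H : RegMultHopf (A := A)) (w : A ⊗[ℂ] A) (f : A) :
    deltaL H w f = (H.Δ f).L w := rfl

theorem deltaL_zero (H : RegMultHopf (A := A)) : deltaL H 0 = 0 := by
  ext f; simp

theorem deltaL_add (H : RegMultHopf (A := A)) (w w' : A ⊗[ℂ] A) :
    deltaL H (w + w') = deltaL H w + deltaL H w' := by
  ext f; simp

/-- `r ⊗ s ↦ Σ (Δ((Δ(a)(1⊗s))₁)(1 ⊗ r)) ⊗ (Δ(a)(1⊗s))₂`, the right-hand side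
of the coassociativity computation for the smash product. -/
def psiMap (H : RegMultHopf (A := A)) (a : A) :
    A ⊗[ℂ] A →ₗ[ℂ] (A ⊗[ℂ] A) ⊗[ℂ] A :=
  TensorProduct.lift (LinearMap.mk₂ ℂ
    (fun r s => LinearMap.rTensor A (H.T1.flip r) (H.T1 a s))
    (fun r r' s => by
      simp [map_add, LinearMap.rTensor_add, LinearMap.add_apply])
    (fun c r s => by
      simp [map_smul, LinearMap.rTensor_smul, LinearMap.smul_apply])
    (fun r s s' => by simp [map_add])
    (fun c r s => by simp [map_smul]))

@[simp] theorem psiMap_tmul (H : RegMultHopf (A := A)) (a r s : A) :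
    psiMap H a (r ⊗ₜ[ℂ] s) = LinearMap.rTensor A (H.T1.flip r) (H.T1 a s) := rfl

/-- The key coassociativity identity for the smash product:
`Σ a₍₁₎ ⊗ Δ(a₍₂₎a')(1 ⊗ a'') = Σ Δ(a)(1 ⊗ (T1 a' a'')₍₂₎)((T1 a' a'')₍₁₎ ⊗ 1)`
in covered form. -/
theorem star_identity (H : RegMultHopf (A := A)) (a a' a'' : A) :
    psiMap H a (H.T1 a' a'') =
      (TensorProduct.assoc ℂ A A A).symm
        (LinearMap.lTensor A (H.T1.flip a'') (H.T1 a a')) := by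
  rw [← sub_eq_zero]
  apply cancel_triple H
  intro c
  rw [map_sub, sub_eq_zero]
  -- helper commutation lemmas
  have commAs : ∀ s : A ⊗[ℂ] (A ⊗[ℂ] A),
      LinearMap.rTensor A (LinearMap.rTensor A (LinearMap.mulLeft ℂ c))
          ((TensorProduct.assoc ℂ A A A).symm s) =
        (TensorProduct.assoc ℂ A A A).symm
          (LinearMap.rTensor (A ⊗[ℂ] A) (LinearMap.mulLeft ℂ c) s) := by
    intro s
    induction s using TensorProduct.induction_on with
    | zero => simp
    | add x y hx hy => simp [map_add, hx, hy]
    | tmul u w =>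
        induction w using TensorProduct.induction_on with
        | zero => simp
        | add x y hx hy =>
            simp only [tmul_add, map_add] at hx hy ⊢
            rw [hx, hy]
        | tmul p q => simp
  have commLR : ∀ (g : A →ₗ[ℂ] A ⊗[ℂ] A) (t : A ⊗[ℂ] A),
      LinearMap.rTensor (A ⊗[ℂ] A) (LinearMap.mulLeft ℂ c)
          (LinearMap.lTensor A g t) =
        LinearMap.lTensor A g
          (LinearMap.rTensor A (LinearMap.mulLeft ℂ c) t) := by
    intro g t
    induction t using TensorProduct.induction_on with
    | zero => simp
    | add x y hx hy => simp [map_add, hx, hy]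
    | tmul p q => simp
  -- the right-hand side
  have hmap : (H.T1.flip a'') ∘ₗ LinearMap.mulRight ℂ a' =
      deltaL H (H.T1 a' a'') := by
    ext f
    simp [T1_mul_left H]
  have hR : LinearMap.rTensor A (LinearMap.rTensor A (LinearMap.mulLeft ℂ c))
      ((TensorProduct.assoc ℂ A A A).symm
        (LinearMap.lTensor A (H.T1.flip a'') (H.T1 a a'))) =
      (TensorProduct.assoc ℂ A A A).symm
        (LinearMap.lTensor A (deltaL H (H.T1 a' a'')) (H.T2 c a)) := by
    rw [commAs, commLR, T1_T2_swap H, ← LinearMap.comp_apply,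
      ← LinearMap.lTensor_comp, hmap]
  rw [hR]
  -- the left-hand side, as a function of `v := T1 a' a''`
  have hL : ∀ v : A ⊗[ℂ] A,
      LinearMap.rTensor A (LinearMap.rTensor A (LinearMap.mulLeft ℂ c))
          (psiMap H a v) =
        (TensorProduct.assoc ℂ A A A).symm
          (LinearMap.lTensor A (deltaL H v) (H.T2 c a)) := by
    intro v
    induction v using TensorProduct.induction_on with
    | zero => simp [deltaL_zero]
    | add x y hx hy => simp [map_add, deltaL_add, LinearMap.lTensor_add, hx, hy]
    | tmul r s' =>
        rw [psiMap_tmul, ← LinearMap.comp_apply, ← LinearMap.rTensor_comp]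
        have hpt : (LinearMap.rTensor A (LinearMap.mulLeft ℂ c)) ∘ₗ H.T1.flip r =
            (LinearMap.lTensor A (LinearMap.mulRight ℂ r)) ∘ₗ
              (LinearMap.mk₂ ℂ (fun p q => H.T2 p q)
                (fun p p' q => by simp) (fun k p q => by simp)
                (fun p q q' => by simp) (fun k p q => by simp) c) := by
          ext f
          exact T1_T2_swap H f r c
        rw [hpt, LinearMap.rTensor_comp, LinearMap.comp_apply]
        have hco : LinearMap.rTensor A
            (LinearMap.mk₂ ℂ (fun p q => H.T2 p q)
              (fun p p' q => by simp) (fun k p q => by simp)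
              (fun p q q' => by simp) (fun k p q => by simp) c) (H.T1 a s') =
            (TensorProduct.assoc ℂ A A A).symm
              (LinearMap.lTensor A (H.T1.flip s') (H.T2 c a)) := by
          have hc2 : LinearMap.rTensor A
              (LinearMap.mk₂ ℂ (fun p q => H.T2 p q)
                (fun p p' q => by simp) (fun k p q => by simp)
                (fun p q q' => by simp) (fun k p q => by simp) c) (H.T1 a s') =
              LinearMap.rTensor A (H.T2 c) (H.T1 a s') := by
            congr 1
          rw [hc2, LinearEquiv.eq_symm_apply, H.coassoc]
        rw [hco]
        -- now reduce to an identity linear in `s := T2 c a`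
        have claim2 : ∀ s : A ⊗[ℂ] A,
            LinearMap.rTensor A (LinearMap.lTensor A (LinearMap.mulRight ℂ r))
                ((TensorProduct.assoc ℂ A A A).symm
                  (LinearMap.lTensor A (H.T1.flip s') s)) =
              (TensorProduct.assoc ℂ A A A).symm
                (LinearMap.lTensor A (deltaL H (r ⊗ₜ[ℂ] s')) s) := by
          intro s
          induction s using TensorProduct.induction_on with
          | zero => simp
          | add x y hx hy => simp [map_add, hx, hy]
          | tmul e f =>
              have claim3 : ∀ w : A ⊗[ℂ] A,
                  LinearMap.rTensor A (LinearMap.lTensor A (LinearMap.mulRight ℂ r))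
                      ((TensorProduct.assoc ℂ A A A).symm (e ⊗ₜ[ℂ] w)) =
                    (TensorProduct.assoc ℂ A A A).symm
                      (e ⊗ₜ[ℂ] (LinearMap.rTensor A (LinearMap.mulRight ℂ r) w)) := by
                intro w
                induction w using TensorProduct.induction_on with
                | zero => simp
                | add x y hx hy =>
                    simp only [tmul_add, map_add] at hx hy ⊢
                    rw [hx, hy]
                | tmul p q => simp
              rw [LinearMap.lTensor_tmul, claim3, LinearMap.flip_apply,
                deltaL_tmul H, LinearMap.lTensor_tmul, deltaL_apply]
        exact claim2 (H.T2 c a)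
  exact hL (H.T1 a' a'')

end AuxHopf

section AuxSmash

variable {A : Type*} [NonUnitalRing A] [Module ℂ A] [SMulCommClass ℂ A A]
  [IsScalarTower ℂ A A]
variable {R : Type*} [AddCommGroup R] [Module ℂ R]

/-- The trilinear map `(u ⊗ v) ⊗ w ↦ x((u▷x')(v▷x'')) ⊗ w`. -/
def Fmap (mulR : R →ₗ[ℂ] R →ₗ[ℂ] R) (act : A →ₗ[ℂ] R →ₗ[ℂ] R) (x x' x'' : R) :
    (A ⊗[ℂ] A) ⊗[ℂ] A →ₗ[ℂ] R ⊗[ℂ] A :=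
  TensorProduct.lift (TensorProduct.lift (LinearMap.mk₂ ℂ
    (fun u v => (TensorProduct.mk ℂ R A) (mulR x (mulR (act u x') (act v x''))))
    (fun u u' v => by simp [map_add, LinearMap.add_apply])
    (fun k u v => by simp [map_smul, LinearMap.smul_apply])
    (fun u v v' => by simp [map_add, LinearMap.add_apply])
    (fun k u v => by simp [map_smul, LinearMap.smul_apply])))

@[simp] theorem Fmap_tmul (mulR : R →ₗ[ℂ] R →ₗ[ℂ] R) (act : A →ₗ[ℂ] R →ₗ[ℂ] R)
    (x x' x'' : R) (u v w : A) :
    Fmap mulR act x x' x'' ((u ⊗ₜ[ℂ] v) ⊗ₜ[ℂ] w) =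
      (mulR x (mulR (act u x') (act v x''))) ⊗ₜ[ℂ] w := rfl

@[simp] theorem smashPair_apply (mulR : R →ₗ[ℂ] R →ₗ[ℂ] R)
    (act : A →ₗ[ℂ] R →ₗ[ℂ] R) (x x' : R) (p q : A) :
    smashPair mulR act x x' p q = mulR x (act p x') ⊗ₜ[ℂ] q := rfl

@[simp] theorem actPair_apply (mulR : R →ₗ[ℂ] R →ₗ[ℂ] R)
    (act : A →ₗ[ℂ] R →ₗ[ℂ] R) (x z : R) (p q : A) :
    actPair mulR act x z p q = mulR (act p x) (act q z) := rfl

end AuxSmash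

/-- **Lemma 5.4.** Let `(A, Δ)` be a regular multiplier Hopf algebra and `R` a
left `A`-module algebra.  The smash product multiplication on `R ⊗ A`,
`(x # a)(x' # a') = Σ x(a₍₁₎x') # a₍₂₎a'`, is associative. -/
theorem smashMul_assoc
    {A : Type*} [NonUnitalRing A] [Module ℂ A] [SMulCommClass ℂ A A]
    [IsScalarTower ℂ A A] {R : Type*} [AddCommGroup R] [Module ℂ R]
    (H : RegMultHopf (A := A)) (mulR : R →ₗ[ℂ] R →ₗ[ℂ] R)
    (act : A →ₗ[ℂ] R →ₗ[ℂ] R) (hMA : IsModAlg H mulR act)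
    (μ : (R ⊗[ℂ] A) →ₗ[ℂ] (R ⊗[ℂ] A) →ₗ[ℂ] (R ⊗[ℂ] A))
    (hμ : IsSmashMul H mulR act μ) :
    ∀ u v w : R ⊗[ℂ] A, μ (μ u v) w = μ u (μ v w) := by
  -- reduce to pure tensors
  have key : ∀ (x x' x'' : R) (a a' a'' : A),
      μ (μ (x ⊗ₜ[ℂ] a) (x' ⊗ₜ[ℂ] a')) (x'' ⊗ₜ[ℂ] a'') =
        μ (x ⊗ₜ[ℂ] a) (μ (x' ⊗ₜ[ℂ] a') (x'' ⊗ₜ[ℂ] a'')) := by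
    intro x x' x'' a a' a''
    have stepL : ∀ t : A ⊗[ℂ] A,
        μ (TensorProduct.lift (smashPair mulR act x x') t) (x'' ⊗ₜ[ℂ] a'') =
          Fmap mulR act x x' x''
            ((TensorProduct.assoc ℂ A A A).symm
              (LinearMap.lTensor A (H.T1.flip a'') t)) := by
      intro t
      induction t using TensorProduct.induction_on with
      | zero => simp
      | add y z hy hz => simp [map_add, LinearMap.add_apply, hy, hz]
      | tmul p q =>
          rw [TensorProduct.lift.tmul, smashPair_apply, hμ,
            LinearMap.lTensor_tmul]
          have inner : ∀ w : A ⊗[ℂ] A,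
              TensorProduct.lift (smashPair mulR act (mulR x (act p x')) x'') w =
                Fmap mulR act x x' x''
                  ((TensorProduct.assoc ℂ A A A).symm (p ⊗ₜ[ℂ] w)) := by
            intro w
            induction w using TensorProduct.induction_on with
            | zero => simp
            | add y z hy hz =>
                simp only [tmul_add, map_add] at hy hz ⊢
                rw [hy, hz]
            | tmul u v =>
                rw [TensorProduct.lift.tmul, smashPair_apply,
                  TensorProduct.assoc_symm_tmul, Fmap_tmul,
                  hMA.mul_assoc']
          exact inner (H.T1 q a'')
    have stepR : ∀ s : A ⊗[ℂ] A,
        μ (x ⊗ₜ[ℂ] a) (TensorProduct.lift (smashPair mulR act x' x'') s) =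
          Fmap mulR act x x' x'' (psiMap H a s) := by
      intro s
      induction s using TensorProduct.induction_on with
      | zero => simp
      | add y z hy hz => simp [map_add, hy, hz]
      | tmul r s' =>
          rw [TensorProduct.lift.tmul, smashPair_apply, hμ, psiMap_tmul]
          have inner : ∀ w : A ⊗[ℂ] A,
              TensorProduct.lift (smashPair mulR act x (mulR x' (act r x''))) w =
                Fmap mulR act x x' x''
                  (LinearMap.rTensor A (H.T1.flip r) w) := by
            intro w
            induction w using TensorProduct.induction_on with
            | zero => simp
            | add y z hy hz => simp [map_add, hy, hz]
            | tmul p' q' =>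
                rw [TensorProduct.lift.tmul, smashPair_apply,
                  LinearMap.rTensor_tmul, hMA.compat]
                have inner2 : ∀ y : A ⊗[ℂ] A,
                    mulR x (TensorProduct.lift (actPair mulR act x' x'') y)
                        ⊗ₜ[ℂ] q' =
                      Fmap mulR act x x' x'' (y ⊗ₜ[ℂ] q') := by
                  intro y
                  induction y using TensorProduct.induction_on with
                  | zero => simp
                  | add y₁ y₂ hy₁ hy₂ =>
                      simp only [map_add, add_tmul, LinearMap.flip_apply] at hy₁ hy₂ ⊢
                      rw [← hy₁, ← hy₂, ← TensorProduct.add_tmul, ← map_add]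
                  | tmul u v =>
                      rw [TensorProduct.lift.tmul, actPair_apply, Fmap_tmul]
                exact inner2 (H.T1 p' r)
          exact inner (H.T1 a s')
    rw [hμ, stepL, hμ, stepR, star_identity H]
  intro u v w
  induction u using TensorProduct.induction_on with
  | zero => simp
  | add u₁ u₂ h₁ h₂ => simp [map_add, LinearMap.add_apply, h₁, h₂]
  | tmul x a =>
      induction v using TensorProduct.induction_on with
      | zero => simp
      | add v₁ v₂ h₁ h₂ => simp [map_add, LinearMap.add_apply, h₁, h₂]
      | tmul x' a' =>
          induction w using TensorProduct.induction_on with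
          | zero => simp
          | add w₁ w₂ h₁ h₂ => simp [map_add, h₁, h₂]
          | tmul x'' a'' => exact key x x' x'' a a' a''

end
end
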